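/- Let L be a distributive lattice, B ⊆ L a basis (containing ⊤, closed under meets, with every element of L a finite join of elements of B), C a complete category, and G : B^op → C a sheaf on B (G preserves the limit for every finite family of basis elements whose join lies in B). Then the right Kan extension Ran G of G along the inclusion B ↪ L is a sheaf on L, and it restricts to G up to natural isomorphism. -/

import Mathlib

open CategoryTheory CategoryTheory.Limits

universe w v u

section

variable {L : Type u} [DistribLattice L] [BoundedOrder L]
  {B : Type u} [SemilatticeInf B] [OrderTop B] (f : B →o L)

/-- The cocone in `L` over the pairwise diagram of a finite family `x : Fin n → L`,
with point the finite join `⋁ᵢ xᵢ`. -/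
def finJoinCocone {n : ℕ} (x : Fin n → L) :
    Cocone (Pairwise.diagram (fun i : ULift.{u} (Fin n) => x i.down)) where
  pt := Finset.univ.sup x
  ι :=
    { app := fun p =>
        homOfLE
          (match p with
          | .single i => Finset.le_sup (f := x) (Finset.mem_univ i.down)
          | .pair i _ =>
              inf_le_left.trans (Finset.le_sup (f := x) (Finset.mem_univ i.down)))
      naturality := fun _ _ _ => Subsingleton.elim _ _ }

/-- Given basis elements `b₁,…,bₙ` of `B` whose join in `L` is (the image of) `v ∈ B`,
the cocone in `B` over the pairwise diagram of the `bᵢ` with point `v`. -/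
def basisJoinCocone (hemb : ∀ a b : B, f a ≤ f b ↔ a ≤ b) {n : ℕ} (b : Fin n → B)
    (v : B) (hv : f v = Finset.univ.sup fun i => f (b i)) :
    Cocone (Pairwise.diagram (fun i : ULift.{u} (Fin n) => b i.down)) where
  pt := v
  ι :=
    { app := fun p =>
        homOfLE
          (match p with
          | .single i =>
              (hemb _ _).mp
                ((Finset.le_sup (f := fun i => f (b i)) (Finset.mem_univ i.down)).trans
                  hv.ge)
          | .pair i _ =>
              inf_le_left.trans
                ((hemb _ _).mp
                  ((Finset.le_sup (f := fun i => f (b i)) (Finset.mem_univ i.down)).trans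
                    hv.ge)))
      naturality := fun _ _ _ => Subsingleton.elim _ _ }

open Opposite

/-!
Because `B ↪ L` is fully faithful, the pointwise right Kan extension restricts to `G`. A map
into `RG y` is the same as a family of maps into the `G e`, for basis elements `e` below `y`,
compatible with restriction. So a compatible family of maps into the `RG xᵢ` gives such maps for
every `e` below some `xᵢ`. Refining each `xᵢ` into basis elements `cₖ`, every basis element `e`
below `⋁ᵢ xᵢ` is the join of the `e ⊓ cₖ`, and the sheaf condition of `G` on these covers extends
the family uniquely to all `e` below `⋁ᵢ xᵢ`.
-/

section PairwiseGluing

variable {α ι : Type*} [SemilatticeInf α] {U : ι → α} {C : Type*} [Category C]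
  (F : αᵒᵖ ⥤ C)

def Pairwise.coneOfCompatible {Z : C} (w : ∀ i, Z ⟶ F.obj (op (U i)))
    (hw : ∀ i j, w i ≫ F.map (homOfLE inf_le_left).op = w j ≫ F.map (homOfLE inf_le_right).op) :
    Cone ((Pairwise.diagram U).op ⋙ F) where
  pt := Z
  π :=
    { app := fun
        | ⟨.single i⟩ => w i
        | ⟨.pair i j⟩ => w i ≫ F.map (homOfLE inf_le_left).op
      naturality := by
        rintro ⟨i | ⟨i, j⟩⟩ ⟨i' | ⟨i', j'⟩⟩ ⟨_ | _ | _ | _⟩ <;>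
          dsimp [Pairwise.diagram, Pairwise.diagramMap] <;>
          simp only [F.map_id, Category.id_comp, Category.comp_id]
        exact hw _ _ }

variable (c : Cocone (Pairwise.diagram U))

theorem Pairwise.hom_ext_of_isLimit_mapCone (hl : IsLimit (F.mapCone c.op)) {Z : C}
    {u₁ u₂ : Z ⟶ F.obj (op c.pt)}
    (h : ∀ i, u₁ ≫ F.map (c.ι.app (.single i)).op = u₂ ≫ F.map (c.ι.app (.single i)).op) :
    u₁ = u₂ := by
  refine hl.hom_ext ?_
  rintro ⟨i | ⟨i, j⟩⟩
  · exact h i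
  · simp only [Functor.mapCone_π_app, Cocone.op_π, NatTrans.op_app, ← c.w (Pairwise.Hom.left i j),
      op_comp, F.map_comp, reassoc_of% (h i)]

theorem Pairwise.exists_lift_of_isLimit_mapCone (hl : IsLimit (F.mapCone c.op)) {Z : C}
    (w : ∀ i, Z ⟶ F.obj (op (U i)))
    (hw : ∀ i j, w i ≫ F.map (homOfLE inf_le_left).op = w j ≫ F.map (homOfLE inf_le_right).op) :
    ∃ ℓ : Z ⟶ F.obj (op c.pt), ∀ i, ℓ ≫ F.map (c.ι.app (.single i)).op = w i :=
  ⟨hl.lift (Pairwise.coneOfCompatible F w hw), fun i => hl.fac _ (op (.single i))⟩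

noncomputable def Pairwise.isLimitMapConeOfExistsUnique
    (h : ∀ (Z : C) (w : ∀ i, Z ⟶ F.obj (op (U i))),
      (∀ i j, w i ≫ F.map (homOfLE inf_le_left).op = w j ≫ F.map (homOfLE inf_le_right).op) →
        ∃! ℓ : Z ⟶ F.obj (op c.pt), ∀ i, ℓ ≫ F.map (c.ι.app (.single i)).op = w i) :
    IsLimit (F.mapCone c.op) := by
  refine IsLimit.ofExistsUnique fun s => ?_
  have hw : ∀ i j, s.π.app (op (.single i)) ≫ F.map (homOfLE inf_le_left).op =
      s.π.app (op (.single j)) ≫ F.map (homOfLE inf_le_right).op := fun i j =>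
    (s.w (op (Pairwise.Hom.left i j))).trans (s.w (op (Pairwise.Hom.right i j))).symm
  obtain ⟨ℓ, hℓ, huniq⟩ := h s.pt _ hw
  refine ⟨ℓ, ?_, fun ℓ' hℓ' => huniq ℓ' fun i => hℓ' (op (.single i))⟩
  rintro ⟨i | ⟨i, j⟩⟩
  · exact hℓ i
  · rw [← s.w (op (Pairwise.Hom.left i j)), ← hℓ i]
    simp only [Functor.mapCone_π_app, Cocone.op_π, NatTrans.op_app, ← c.w (Pairwise.Hom.left i j),
      op_comp, F.map_comp, Category.assoc]
    rfl

end PairwiseGluing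

section RanAlongMonotone

variable {α β : Type*} [Preorder α] [Preorder β] {C : Type*} [Category C]

theorem map_homOfLE_op_comp (F : αᵒᵖ ⥤ C) {a b d : α} (h₁ : b ≤ a) (h₂ : d ≤ b) {Z : C}
    (u : Z ⟶ F.obj (op a)) :
    (u ≫ F.map (homOfLE h₁).op) ≫ F.map (homOfLE h₂).op = u ≫ F.map (homOfLE (h₂.trans h₁)).op := by
  rw [Category.assoc, ← F.map_comp, ← op_comp, homOfLE_comp]

def IsRestrictionCompatible (F : αᵒᵖ ⥤ C) {Z : C} {P : α → Prop}
    (s : ∀ a, P a → (Z ⟶ F.obj (op a))) : Prop :=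
  ∀ a a' (h : a' ≤ a) (ha : P a) (ha' : P a'), s a ha ≫ F.map (homOfLE h).op = s a' ha'

variable {g : α →o β} {F : αᵒᵖ ⥤ C} {E : βᵒᵖ ⥤ C} (η : g.monotone.functor.op ⋙ E ⟶ F)

def ranProj (y : β) (a : α) (h : g a ≤ y) : E.obj (op y) ⟶ F.obj (op a) :=
  E.map (homOfLE h : g.monotone.functor.obj a ⟶ y).op ≫ η.app (op a)

theorem ranProj_map {y : β} {a a' : α} (h : g a ≤ y) (h' : a' ≤ a) :
    ranProj η y a h ≫ F.map (homOfLE h').op = ranProj η y a' ((g.monotone h').trans h) := by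
  rw [ranProj, ranProj, Category.assoc, ← η.naturality, Functor.comp_map, ← E.map_comp_assoc]
  rfl

theorem map_ranProj {y y' : β} {a : α} (hy : y' ≤ y) (h : g a ≤ y') :
    E.map (homOfLE hy).op ≫ ranProj η y' a h = ranProj η y a (h.trans hy) := by
  rw [ranProj, ranProj, ← E.map_comp_assoc]
  rfl

theorem isRestrictionCompatible_comp_ranProj {y : β} {Z : C} (ℓ : Z ⟶ E.obj (op y)) :
    IsRestrictionCompatible F fun a (ha : g a ≤ y) => ℓ ≫ ranProj η y a ha :=
  fun _ _ h _ _ => by rw [Category.assoc, ranProj_map]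

variable {η} (hpt : (Functor.RightExtension.mk E η).IsPointwiseRightKanExtension)
include hpt

theorem ranProj_hom_ext {y : β} {Z : C} {ℓ₁ ℓ₂ : Z ⟶ E.obj (op y)}
    (h : ∀ a (ha : g a ≤ y), ℓ₁ ≫ ranProj η y a ha = ℓ₂ ≫ ranProj η y a ha) : ℓ₁ = ℓ₂ :=
  (hpt (op y)).hom_ext fun p => h p.right.unop (leOfHom p.hom.unop)

theorem exists_comp_ranProj_eq {y : β} {Z : C} {s : ∀ a, g a ≤ y → (Z ⟶ F.obj (op a))}
    (hs : IsRestrictionCompatible F s) :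
    ∃ ℓ : Z ⟶ E.obj (op y), ∀ a ha, ℓ ≫ ranProj η y a ha = s a ha := by
  let cone : Cone (StructuredArrow.proj (op y) g.monotone.functor.op ⋙ F) :=
    { pt := Z
      π :=
        { app := fun p => s p.right.unop (leOfHom p.hom.unop)
          naturality := fun p p' φ => (Category.id_comp _).trans (hs _ _ _ _ _).symm } }
  exact ⟨(hpt (op y)).lift cone, fun a ha =>
    (hpt (op y)).fac cone (StructuredArrow.mk (Y := op a) (homOfLE ha).op)⟩

end RanAlongMonotone

section RanOfPairwiseCompatible

variable {α β ι : Type*} [Preorder α] [SemilatticeInf β] {x : ι → β} {C : Type*} [Category C]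
  {g : α →o β} {F : αᵒᵖ ⥤ C} {E : βᵒᵖ ⥤ C} (η : g.monotone.functor.op ⋙ E ⟶ F)
  {Z : C} (w : ∀ i, Z ⟶ E.obj (op (x i)))

noncomputable def ranRestrictFamily (a : α) (ha : ∃ i, g a ≤ x i) : Z ⟶ F.obj (op a) :=
  w ha.choose ≫ ranProj η (x ha.choose) a ha.choose_spec

variable {w}
variable (hw : ∀ i j, w i ≫ E.map (homOfLE inf_le_left).op = w j ≫ E.map (homOfLE inf_le_right).op)
include hw

theorem ranRestrictFamily_eq {a : α} (ha : ∃ i, g a ≤ x i) (i : ι) (h : g a ≤ x i) :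
    ranRestrictFamily η w a ha = w i ≫ ranProj η (x i) a h := by
  have key : ∀ j k (hj : g a ≤ x j) (hk : g a ≤ x k),
      w j ≫ ranProj η (x j) a hj = w k ≫ ranProj η (x k) a hk := fun j k hj hk => by
    rw [← map_ranProj η inf_le_left (le_inf hj hk), ← map_ranProj η inf_le_right (le_inf hj hk),
      ← Category.assoc, ← Category.assoc, hw]
  exact key _ _ _ _

theorem isRestrictionCompatible_ranRestrictFamily :
    IsRestrictionCompatible F (ranRestrictFamily η w) := by
  rintro a a' h ⟨i, hi⟩ ha'
  rw [ranRestrictFamily_eq η hw _ i hi, Category.assoc, ranProj_map,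
    ranRestrictFamily_eq η hw ha' i]

theorem comp_map_single_eq_iff
    (hpt : (Functor.RightExtension.mk E η).IsPointwiseRightKanExtension)
    (c : Cocone (Pairwise.diagram x)) (ℓ : Z ⟶ E.obj (op c.pt)) :
    (∀ i, ℓ ≫ E.map (c.ι.app (.single i)).op = w i) ↔
      ∀ a (ha : g a ≤ c.pt) (hx : ∃ i, g a ≤ x i),
        ℓ ≫ ranProj η c.pt a ha = ranRestrictFamily η w a hx := by
  have hc : ∀ i, x i ≤ c.pt := fun i => leOfHom (c.ι.app (.single i))
  change (∀ i, ℓ ≫ E.map (homOfLE (hc i)).op = w i) ↔ _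
  constructor
  · rintro hℓ a ha' ⟨i, hi⟩
    rw [ranRestrictFamily_eq η hw _ i hi, ← hℓ i, Category.assoc, map_ranProj]
  · refine fun hℓ i => ranProj_hom_ext hpt fun a ha => ?_
    rw [Category.assoc, map_ranProj, hℓ a _ ⟨i, ha⟩, ranRestrictFamily_eq η hw _ i ha]

end RanOfPairwiseCompatible

section LatticeCovers

variable {α β : Type*} {g : α → β}

theorem eq_sup_inf_of_le_sup [SemilatticeInf α] [DistribLattice β] [OrderBot β]
    (hinf : ∀ a b, g (a ⊓ b) = g a ⊓ g b) {κ : Type*} (s : Finset κ) (c : κ → α) {b : α}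
    (hb : g b ≤ s.sup fun k => g (c k)) : g b = s.sup fun k => g (b ⊓ c k) := by
  simp only [hinf, ← Finset.sup_inf_distrib_left, inf_eq_left.mpr hb]

theorem exists_fin_refinement [SemilatticeSup β] [OrderBot β]
    (hbasis : ∀ y : β, ∃ (n : ℕ) (b : Fin n → α), y = Finset.univ.sup fun i => g (b i))
    {ι : Type*} [Fintype ι] (x : ι → β) :
    ∃ (N : ℕ) (c : Fin N → α), (∀ k, ∃ i, g (c k) ≤ x i) ∧
      ∀ i, x i ≤ Finset.univ.sup fun k => g (c k) := by
  choose m b hb using fun i => hbasis (x i)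
  let e := Fintype.equivFin ((i : ι) × Fin (m i))
  refine ⟨_, fun k => b (e.symm k).1 (e.symm k).2, fun k => ⟨(e.symm k).1, ?_⟩, fun i => ?_⟩
  · rw [hb (e.symm k).1]
    exact Finset.le_sup (f := fun j => g (b _ j)) (Finset.mem_univ _)
  · rw [hb i]
    refine Finset.sup_le fun j _ => ?_
    have h := Finset.le_sup (f := fun k => g (b (e.symm k).1 (e.symm k).2))
      (Finset.mem_univ (e ⟨i, j⟩))
    rwa [Equiv.symm_apply_apply] at h

end LatticeCovers

section BasisSheaf

omit [OrderTop B]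

variable {f} {C : Type*} [Category C]

def IsSheafOnBasis (hemb : ∀ a b : B, f a ≤ f b ↔ a ≤ b) (G : Bᵒᵖ ⥤ C) : Prop :=
  ∀ (n : ℕ) (b : Fin n → B) (v : B) (hv : f v = Finset.univ.sup fun i => f (b i)),
    Nonempty (IsLimit (G.mapCone (basisJoinCocone f hemb b v hv).op))

variable {hemb : ∀ a b : B, f a ≤ f b ↔ a ≤ b} {G : Bᵒᵖ ⥤ C} (hG : IsSheafOnBasis hemb G)
  (hinf : ∀ a b : B, f (a ⊓ b) = f a ⊓ f b)
include hG hinf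

theorem IsSheafOnBasis.hom_ext {N : ℕ} (c : Fin N → B) {b : B}
    (hb : f b ≤ Finset.univ.sup fun k => f (c k)) {Z : C} {u₁ u₂ : Z ⟶ G.obj (op b)}
    (h : ∀ k, u₁ ≫ G.map (homOfLE (inf_le_left : b ⊓ c k ≤ b)).op =
      u₂ ≫ G.map (homOfLE (inf_le_left : b ⊓ c k ≤ b)).op) : u₁ = u₂ :=
  Pairwise.hom_ext_of_isLimit_mapCone G _
    (hG N _ b (eq_sup_inf_of_le_sup hinf _ c hb)).some fun k => h k.down

theorem IsSheafOnBasis.exists_comp_map_eq {N : ℕ} (c : Fin N → B) {P : B → Prop}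
    (hc : ∀ k e, e ≤ c k → P e) {Z : C} {s : ∀ e, P e → (Z ⟶ G.obj (op e))}
    (hs : IsRestrictionCompatible G s) {b : B} (hb : f b ≤ Finset.univ.sup fun k => f (c k)) :
    ∃ u : Z ⟶ G.obj (op b), ∀ d (hdb : d ≤ b) (hd : P d), u ≫ G.map (homOfLE hdb).op = s d hd := by
  obtain ⟨u, hu⟩ : ∃ u : Z ⟶ G.obj (op b), ∀ k : ULift (Fin N),
      u ≫ G.map (homOfLE (inf_le_left : b ⊓ c k.down ≤ b)).op = s _ (hc k.down _ inf_le_right) :=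
    Pairwise.exists_lift_of_isLimit_mapCone G _
      (hG N _ b (eq_sup_inf_of_le_sup hinf _ c hb)).some
      (fun k => s _ (hc k.down _ inf_le_right)) fun k l =>
        (hs _ _ _ _ (hc k.down _ (inf_le_left.trans inf_le_right))).trans (hs _ _ _ _ _).symm
  refine ⟨u, fun d hdb hd => hG.hom_ext hinf c ((f.monotone hdb).trans hb) fun k => ?_⟩
  rw [map_homOfLE_op_comp, hs d _ _ hd (hc k _ inf_le_right),
    ← hs _ _ (inf_le_inf_right (c k) hdb) (hc k _ inf_le_right), ← hu ⟨k⟩, map_homOfLE_op_comp]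

theorem IsSheafOnBasis.existsUnique_extend {N : ℕ} (c : Fin N → B) {P : B → Prop}
    (hc : ∀ k e, e ≤ c k → P e) {Z : C} {s : ∀ e, P e → (Z ⟶ G.obj (op e))}
    (hs : IsRestrictionCompatible G s) {y : L} (hy : y ≤ Finset.univ.sup fun k => f (c k)) :
    ∃! t : ∀ e, f e ≤ y → (Z ⟶ G.obj (op e)),
      IsRestrictionCompatible G t ∧ ∀ e (he : f e ≤ y) (hP : P e), t e he = s e hP := by
  choose u hu using fun e (he : f e ≤ y) => hG.exists_comp_map_eq hinf c hc hs (he.trans hy)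
  have hu_inf : ∀ e he k, u e he ≫ G.map (homOfLE (inf_le_left : e ⊓ c k ≤ e)).op =
      s _ (hc k _ inf_le_right) := fun e he k => hu e he _ _ _
  refine ⟨u, ⟨fun e e' h he he' => ?_, fun e he hP => ?_⟩, fun t ⟨ht, hts⟩ => ?_⟩
  · refine hG.hom_ext hinf c (he'.trans hy) fun k => ?_
    rw [map_homOfLE_op_comp, hu, hu_inf]
  · simpa using hu e he e le_rfl hP
  · funext e he
    refine hG.hom_ext hinf c (he.trans hy) fun k => ?_
    rw [ht _ _ _ he ((f.monotone inf_le_left).trans he), hts _ _ (hc k _ inf_le_right), hu_inf]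

theorem IsSheafOnBasis.isLimit_mapCone_ran {RG : Lᵒᵖ ⥤ C} {α : f.monotone.functor.op ⋙ RG ⟶ G}
    (hpt : (Functor.RightExtension.mk RG α).IsPointwiseRightKanExtension)
    {ι : Type*} {x : ι → L} (c : Cocone (Pairwise.diagram x)) {N : ℕ} (cc : Fin N → B)
    (hcc : ∀ k, ∃ i, f (cc k) ≤ x i) (hcov : c.pt ≤ Finset.univ.sup fun k => f (cc k)) :
    Nonempty (IsLimit (RG.mapCone c.op)) := by
  refine ⟨Pairwise.isLimitMapConeOfExistsUnique _ _ fun Z w hw => ?_⟩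
  obtain ⟨s, ⟨hs, hsw⟩, huniq⟩ := hG.existsUnique_extend hinf cc
    (fun k e he => (hcc k).imp fun i hi => (f.monotone he).trans hi)
    (isRestrictionCompatible_ranRestrictFamily α hw) hcov
  obtain ⟨ℓ, hℓ⟩ := exists_comp_ranProj_eq hpt hs
  refine ⟨ℓ, (comp_map_single_eq_iff α hw hpt c ℓ).2 fun a ha hx => (hℓ a ha).trans (hsw a ha hx),
    fun ℓ' hℓ' => ranProj_hom_ext hpt fun a ha => ?_⟩
  rw [hℓ, ← huniq _ ⟨isRestrictionCompatible_comp_ranProj α ℓ',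
    (comp_map_single_eq_iff α hw hpt c ℓ').1 hℓ'⟩]

end BasisSheaf

theorem ran_basis_sheaf_is_sheaf
    {C : Type w} [Category.{v} C] [HasLimitsOfSize.{u, u} C]
    (hemb : ∀ a b : B, f a ≤ f b ↔ a ≤ b)
    (hinf : ∀ a b : B, f (a ⊓ b) = f a ⊓ f b)
    (hbasis : ∀ x : L, ∃ (n : ℕ) (b : Fin n → B),
      x = Finset.univ.sup fun i => f (b i))
    (G : Bᵒᵖ ⥤ C)
    (hG : ∀ (n : ℕ) (b : Fin n → B) (v : B)
      (hv : f v = Finset.univ.sup fun i => f (b i)),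
      Nonempty (IsLimit (G.mapCone (basisJoinCocone f hemb b v hv).op)))
    (RG : Lᵒᵖ ⥤ C) (α : f.monotone.functor.op ⋙ RG ⟶ G)
    [RG.IsRightKanExtension α] :
    (∀ (n : ℕ) (x : Fin n → L),
        Nonempty (IsLimit (RG.mapCone (finJoinCocone x).op))) ∧
      Nonempty (f.monotone.functor.op ⋙ RG ≅ G) := by
  have : f.monotone.functor.Full :=
    inferInstanceAs (OrderEmbedding.ofMapLEIff f hemb).monotone.functor.Full
  have : Functor.HasPointwiseRightKanExtension f.monotone.functor.op G := fun _ => inferInstance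
  let hpt := Functor.isPointwiseRightKanExtensionOfIsRightKanExtension RG α
  refine ⟨fun n x => ?_, ⟨@asIso _ _ _ _ α hpt.isIso_hom⟩⟩
  obtain ⟨N, c, hc, hcov⟩ := exists_fin_refinement hbasis fun i : ULift.{u} (Fin n) => x i.down
  exact IsSheafOnBasis.isLimit_mapCone_ran hG hinf hpt (finJoinCocone x) c hc
    (Finset.sup_le fun i _ => hcov ⟨i⟩ : Finset.univ.sup x ≤ _)

end
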